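/- Local increase of the optimal production rate at positive inventory: assume x₀ ≥ 0 and that there exist an optimal policy u* ∈ S_u for J_σ and a constant η > 0 with η ≤ u*(t) ≤ α(t)/(2aβ(t)) − η for all t. Let x* be the trajectory of u* and define w(t₁,t₂) := ∫_{t₁}^{t₂} u*(s) ds. If t ∈ (0,T) and x*(t) > 0, then there exists δ̄ > 0 such that w(t−δ, t) ≤ w(t, t+δ) for all 0 < δ ≤ δ̄. -/

import Mathlib

open MeasureTheory Set
open scoped NNReal

noncomputable section

/-- Combined holding/shortage cost with holding factor `Ch` and shortage factor `Cs`. -/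
def holding (Ch Cs x : ℝ) : ℝ := if x < 0 then Cs * x ^ 2 else Ch * x ^ 2

/-- Membership in the reduced policy space `S_u`. -/
def memSu (T a : ℝ) (α β : ℝ → ℝ) (u : ℝ → ℝ) : Prop :=
  Measurable u ∧ ∀ t ∈ Icc (0 : ℝ) T, 0 ≤ u t ∧ u t ≤ α t / (2 * a * β t)

/-- Inventory trajectory under production rate `u` (with `γ(t) = 1 + aβ(t)`). -/
def trajU (a : ℝ) (α β : ℝ → ℝ) (x₀ : ℝ) (u : ℝ → ℝ) (t : ℝ) : ℝ :=
  x₀ + ∫ s in (0 : ℝ)..t, (u s * (1 + a * β s) - α s / 2)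

/-- The objective `J_σ(u)` over the reduced policy space. -/
def JobjU (T a σ Ch Cs ChT CsT : ℝ) (α β : ℝ → ℝ) (x₀ : ℝ) (u : ℝ → ℝ) : ℝ :=
  (∫ s in (0 : ℝ)..T,
    (-(a * u s ^ 2 * (1 + a * β s)) + α s ^ 2 / (4 * β s)
      - holding Ch Cs (trajU a α β x₀ u s)))
  - holding ChT CsT (trajU a α β x₀ u T)
  - σ * sSup (trajU a α β x₀ u '' Icc 0 T)

lemma holding_continuous (Ch Cs : ℝ) : Continuous (holding Ch Cs) := by
  unfold holding
  apply Continuous.if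
  · intro x hx
    have h0 : x = 0 := by
      have h : frontier {x : ℝ | x < 0} = {(0:ℝ)} := by
        have h2 : {x : ℝ | x < 0} = Iio (0:ℝ) := rfl
        rw [h2, frontier_Iio]
      rw [h] at hx; simpa using hx
    simp [h0]
  · fun_prop
  · fun_prop

lemma holding_mono {Ch Cs : ℝ} (hCh : 0 ≤ Ch) {x y : ℝ} (hx : 0 ≤ x) (hxy : x ≤ y) :
    holding Ch Cs x ≤ holding Ch Cs y := by
  unfold holding
  rw [if_neg (not_lt.mpr hx), if_neg (not_lt.mpr (hx.trans hxy))]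
  exact mul_le_mul_of_nonneg_left (pow_le_pow_left₀ hx hxy 2) hCh

lemma integrableOn_of_bdd {f : ℝ → ℝ} {s : Set ℝ} (hs : MeasurableSet s)
    (hvol : volume s < ⊤) (hf : Measurable f) {C : ℝ} (hC : ∀ x ∈ s, |f x| ≤ C) :
    IntegrableOn f s := by
  have hc : IntegrableOn (fun _ : ℝ => C) s := integrableOn_const hvol.ne
  refine hc.mono' hf.aestronglyMeasurable ?_
  refine (ae_restrict_iff' hs).2 (ae_of_all _ fun x hx => ?_)
  simpa [Real.norm_eq_abs] using hC x hx

lemma intervalIntegrable_of_bdd {f : ℝ → ℝ} (hf : Measurable f) {C : ℝ}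
    (hC : ∀ x, |f x| ≤ C) (p q : ℝ) : IntervalIntegrable f volume p q := by
  rw [intervalIntegrable_iff]
  exact integrableOn_of_bdd measurableSet_Ioc measure_Ioc_lt_top hf (fun x _ => hC x)


set_option maxHeartbeats 1000000 in
/-- at interior times of strictly positive inventory, the optimal
production rate locally increases, in the integrated sense
`∫_{t-δ}^t u* ≤ ∫_t^{t+δ} u*` for all small `δ > 0`. -/
theorem optimal_rate_locally_increasing_at_positive_inventory
    (T a σ Ch Cs ChT CsT : ℝ)
    (hT : 0 < T) (ha : 0 < a) (hσ : 0 ≤ σ)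
    (hCh : 0 < Ch) (hCs : 0 < Cs) (hChT : 0 < ChT) (hCsT : 0 < CsT)
    (α β : ℝ → ℝ)
    (hαLip : ∃ K : ℝ≥0, LipschitzOnWith K α (Icc 0 T))
    (hβLip : ∃ K : ℝ≥0, LipschitzOnWith K β (Icc 0 T))
    (hα : ∀ t ∈ Icc (0 : ℝ) T, 0 < α t) (hβ : ∀ t ∈ Icc (0 : ℝ) T, 0 < β t)
    (x₀ : ℝ) (hx₀ : 0 ≤ x₀)
    (ustar : ℝ → ℝ) (hmem : memSu T a α β ustar)
    (hint : ∃ η > (0 : ℝ), ∀ t ∈ Icc (0 : ℝ) T,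
      η ≤ ustar t ∧ ustar t ≤ α t / (2 * a * β t) - η)
    (hopt : ∀ u : ℝ → ℝ, memSu T a α β u →
      JobjU T a σ Ch Cs ChT CsT α β x₀ u ≤ JobjU T a σ Ch Cs ChT CsT α β x₀ ustar)
    (t : ℝ) (ht : t ∈ Ioo (0 : ℝ) T) (hpos : 0 < trajU a α β x₀ ustar t) :
    ∃ δbar > (0 : ℝ), ∀ δ : ℝ, 0 < δ → δ ≤ δbar →
      (∫ s in (t - δ)..t, ustar s) ≤ ∫ s in t..(t + δ), ustar s := by
  obtain ⟨η, hη, hηb⟩ := hint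
  obtain ⟨humeas, husu⟩ := hmem
  obtain ⟨ht0, htT⟩ := ht
  obtain ⟨Kα, hKα⟩ := hαLip
  obtain ⟨Kβ, hKβ⟩ := hβLip
  have hT0 : (0:ℝ) ≤ T := hT.le
  have htmem : t ∈ Icc (0:ℝ) T := ⟨ht0.le, htT.le⟩
  -- clamped versions of the coefficients
  set proj : ℝ → ℝ := fun s => min (max s 0) T with hprojdef
  have hprojc : Continuous proj := (continuous_id.max continuous_const).min continuous_const
  have hprojmem : ∀ s, proj s ∈ Icc (0:ℝ) T := fun s =>
    ⟨le_min (le_max_right _ _) hT0, min_le_right _ _⟩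
  have hprojid : ∀ s ∈ Icc (0:ℝ) T, proj s = s := fun s hs => by
    simp only [hprojdef, max_eq_left hs.1, min_eq_left hs.2]
  set αe : ℝ → ℝ := fun s => α (proj s) with hαedef
  set βe : ℝ → ℝ := fun s => β (proj s) with hβedef
  have hαec : Continuous αe := hKα.continuousOn.comp_continuous hprojc hprojmem
  have hβec : Continuous βe := hKβ.continuousOn.comp_continuous hprojc hprojmem
  have hαee : ∀ s ∈ Icc (0:ℝ) T, αe s = α s := fun s hs => by
    simp only [hαedef, hprojid s hs]
  have hβee : ∀ s ∈ Icc (0:ℝ) T, βe s = β s := fun s hs => by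
    simp only [hβedef, hprojid s hs]
  have hβepos : ∀ s, 0 < βe s := fun s => hβ _ (hprojmem s)
  have hαepos : ∀ s, 0 < αe s := fun s => hα _ (hprojmem s)
  set γe : ℝ → ℝ := fun s => 1 + a * βe s with hγedef
  have hγec : Continuous γe := continuous_const.add (continuous_const.mul hβec)
  have hγe1 : ∀ s, 1 ≤ γe s := fun s =>
    le_add_of_nonneg_right (mul_nonneg ha.le (hβepos s).le)
  have hγepos : ∀ s, 0 < γe s := fun s => lt_of_lt_of_le one_pos (hγe1 s)
  have hγee : ∀ s ∈ Icc (0:ℝ) T, (1 + a * β s) = γe s := fun s hs => by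
    rw [hγedef]; simp only [hβee s hs]
  -- bound on ustar
  obtain ⟨M, hM⟩ := (isCompact_Icc (a := (0:ℝ)) (b := T)).exists_bound_of_continuousOn
      (f := fun s => αe s / (2 * a * βe s))
      ((hαec.div (by fun_prop) (fun s => by have := hβepos s; positivity)).continuousOn)
  have hu_bd : ∀ s ∈ Icc (0:ℝ) T, |ustar s| ≤ M := by
    intro s hs
    have h1 := (husu s hs).1
    have h2 := (husu s hs).2
    have h3 : α s / (2 * a * β s) = αe s / (2 * a * βe s) := by
      rw [hαee s hs, hβee s hs]
    rw [abs_of_nonneg h1]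
    calc ustar s ≤ αe s / (2 * a * βe s) := by rw [← h3]; exact h2
      _ ≤ |αe s / (2 * a * βe s)| := le_abs_self _
      _ ≤ M := by have h := hM s hs; rwa [Real.norm_eq_abs] at h
  have hMnn : 0 ≤ M := le_trans (abs_nonneg _) (hu_bd 0 ⟨le_rfl, hT0⟩)
  -- generic: interval integrability within [0,T] from IntegrableOn (Icc 0 T)
  have hII : ∀ f : ℝ → ℝ, IntegrableOn f (Icc 0 T) → ∀ p q : ℝ, p ∈ Icc (0:ℝ) T →
      q ∈ Icc (0:ℝ) T → IntervalIntegrable f volume p q := by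
    intro f hf p q hp hq
    rw [intervalIntegrable_iff]
    refine hf.mono_set (Ioc_subset_Icc_self.trans (Icc_subset_Icc ?_ ?_))
    · exact le_min hp.1 hq.1
    · exact max_le hp.2 hq.2
  -- the drift of the optimal trajectory, with clamped coefficients
  set g : ℝ → ℝ := fun s => ustar s * γe s - αe s / 2 with hgdef
  obtain ⟨Cγ, hCγ⟩ := (isCompact_Icc (a := (0:ℝ)) (b := T)).exists_bound_of_continuousOn
      hγec.continuousOn
  obtain ⟨Cα, hCα⟩ := (isCompact_Icc (a := (0:ℝ)) (b := T)).exists_bound_of_continuousOn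
      hαec.continuousOn
  have hgmeas : Measurable g := by
    apply Measurable.sub
    · exact humeas.mul hγec.measurable
    · exact (hαec.measurable).div_const 2
  have hg_bd : ∀ s ∈ Icc (0:ℝ) T, |g s| ≤ M * Cγ + Cα / 2 := by
    intro s hs
    have h1 : |ustar s * γe s| ≤ M * Cγ := by
      rw [abs_mul]
      refine mul_le_mul (hu_bd s hs) ?_ (abs_nonneg _) hMnn
      have h := hCγ s hs; rwa [Real.norm_eq_abs] at h
    have h2 : |αe s / 2| ≤ Cα / 2 := by
      rw [abs_div, abs_two]
      have h := hCα s hs; rw [Real.norm_eq_abs] at h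
      linarith
    calc |g s| ≤ |ustar s * γe s| + |αe s / 2| := abs_sub _ _
      _ ≤ M * Cγ + Cα / 2 := add_le_add h1 h2
  have hgint : IntegrableOn g (Icc 0 T) :=
    integrableOn_of_bdd measurableSet_Icc measure_Icc_lt_top hgmeas hg_bd
  -- the optimal trajectory, rewritten
  set X : ℝ → ℝ := fun s => x₀ + ∫ r in (0:ℝ)..s, g r with hXdef
  have hsubIcc : ∀ s ∈ Icc (0:ℝ) T, uIcc (0:ℝ) s ⊆ Icc (0:ℝ) T := by
    intro s hs
    rw [uIcc_of_le hs.1]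
    exact Icc_subset_Icc le_rfl hs.2
  have hX_traj : ∀ s ∈ Icc (0:ℝ) T, X s = trajU a α β x₀ ustar s := by
    intro s hs
    unfold trajU
    have hx : X s = x₀ + ∫ r in (0:ℝ)..s, g r := rfl
    rw [hx]
    congr 1
    apply intervalIntegral.integral_congr
    intro r hr
    have hr' : r ∈ Icc (0:ℝ) T := hsubIcc s hs hr
    simp only [hgdef, hαee r hr', hγee r hr']
  have hXc : ContinuousOn X (Icc 0 T) := by
    have h := intervalIntegral.continuousOn_primitive_interval (a := (0:ℝ)) (b := T) (f := g)
        (μ := volume) (by rwa [uIcc_of_le hT0])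
    rw [uIcc_of_le hT0] at h
    exact continuousOn_const.add h
  have hXt : 0 < X t := by rw [hX_traj t htmem]; exact hpos
  -- lower bound on X near t
  set c : ℝ := X t / 2 with hcdef
  have hc : 0 < c := half_pos hXt
  have hXct : ContinuousWithinAt X (Icc 0 T) t := hXc t htmem
  rw [Metric.continuousWithinAt_iff] at hXct
  obtain ⟨δ₁, hδ₁pos, hδ₁p⟩ := hXct c hc
  set δ₀ : ℝ := δ₁ / 2 with hδ₀def
  have hδ₀pos : 0 < δ₀ := half_pos hδ₁pos
  have hXlb : ∀ s ∈ Icc (0:ℝ) T, |s - t| ≤ δ₀ → c ≤ X s := by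
    intro s hs hd
    have hdist : dist s t < δ₁ := by
      rw [Real.dist_eq]
      calc |s - t| ≤ δ₀ := hd
        _ < δ₁ := by rw [hδ₀def]; linarith
    have h2 := hδ₁p hs hdist
    rw [Real.dist_eq] at h2
    have h3 := (abs_lt.mp h2).1
    have h5 : X t = 2 * c := by rw [hcdef]; ring
    linarith
  -- choice of δbar
  set δbar : ℝ := min (min (t/2) ((T - t)/2)) δ₀ with hδbardef
  have hδbarpos : 0 < δbar := by
    apply lt_min (lt_min (by linarith) (by linarith)) hδ₀pos
  refine ⟨δbar, hδbarpos, ?_⟩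
  intro δ hδ hδb
  by_contra hAB
  push_neg at hAB
  -- basic bounds on δ
  have hδt2 : δ ≤ t/2 := le_trans hδb (le_trans (min_le_left _ _) (min_le_left _ _))
  have hδT2 : δ ≤ (T - t)/2 := le_trans hδb (le_trans (min_le_left _ _) (min_le_right _ _))
  have hδδ₀ : δ ≤ δ₀ := le_trans hδb (min_le_right _ _)
  have h1 : 0 ≤ t - δ := by linarith
  have h4 : t + δ ≤ T := by linarith
  have htδm : t - δ ∈ Icc (0:ℝ) T := ⟨h1, by linarith⟩
  have htδm' : t + δ ∈ Icc (0:ℝ) T := ⟨by linarith, h4⟩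
  set A : ℝ := ∫ s in (t - δ)..t, ustar s with hAdef
  set B : ℝ := ∫ s in t..(t + δ), ustar s with hBdef
  have hΔpos : 0 < A - B := by simp only [hAdef, hBdef]; linarith [hAB]
  set Δ : ℝ := A - B with hΔdef
  -- choice of ε
  set ε : ℝ := min η (min (c/δ) (Δ/(2*δ))) with hεdef
  have hεpos : 0 < ε := by
    apply lt_min hη (lt_min (div_pos hc hδ) (div_pos hΔpos (by linarith)))
  have hεη : ε ≤ η := min_le_left _ _
  have hεc : ε * δ ≤ c := by
    have h := le_trans (min_le_right η _) (min_le_left (c/δ) (Δ/(2*δ)))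
    have h2 : ε ≤ c / δ := le_trans (min_le_right η _) (min_le_left _ _)
    calc ε * δ ≤ (c/δ) * δ := mul_le_mul_of_nonneg_right h2 hδ.le
      _ = c := by field_simp
  have hεΔ : 2 * (ε * δ) ≤ Δ := by
    have h2 : ε ≤ Δ / (2*δ) := le_trans (min_le_right η _) (min_le_right _ _)
    have h3 : ε * (2*δ) ≤ (Δ/(2*δ)) * (2*δ) := mul_le_mul_of_nonneg_right h2 (by linarith)
    have h4 : (Δ/(2*δ)) * (2*δ) = Δ := by field_simp
    linarith
  -- the perturbation
  set e : ℝ → ℝ := fun s =>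
    if s ∈ Ioc (t - δ) t then -(ε / γe s) else if s ∈ Ioc t (t + δ) then ε / γe s else 0
    with hedef
  set φ : ℝ → ℝ := fun s =>
    if s ∈ Ioc (t - δ) t then -ε else if s ∈ Ioc t (t + δ) then ε else 0 with hφdef
  have hemeas : Measurable e := by
    apply Measurable.ite measurableSet_Ioc
    · exact (measurable_const.div hγec.measurable).neg
    · apply Measurable.ite measurableSet_Ioc
      · exact measurable_const.div hγec.measurable
      · exact measurable_const
  have hφmeas : Measurable φ := by
    apply Measurable.ite measurableSet_Ioc measurable_const
    exact Measurable.ite measurableSet_Ioc measurable_const measurable_const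
  have he_abs : ∀ s, |e s| ≤ ε := by
    intro s
    have hbase : |ε / γe s| ≤ ε := by
      rw [abs_of_nonneg (div_nonneg hεpos.le (hγepos s).le)]
      exact div_le_self hεpos.le (hγe1 s)
    rw [hedef]
    by_cases h1' : s ∈ Ioc (t - δ) t
    · simpa [h1', abs_neg] using hbase
    · by_cases h2' : s ∈ Ioc t (t + δ)
      · simpa [h1', h2'] using hbase
      · simp [h1', h2', hεpos.le]
  have hφ_abs : ∀ s, |φ s| ≤ ε := by
    intro s
    rw [hφdef]
    by_cases h1' : s ∈ Ioc (t - δ) t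
    · simp [h1', le_refl, abs_neg, abs_of_nonneg hεpos.le]
    · by_cases h2' : s ∈ Ioc t (t + δ)
      · simp [h1', h2', abs_of_nonneg hεpos.le]
      · simp [h1', h2', hεpos.le]
  have heγφ : ∀ s, e s * γe s = φ s := by
    intro s
    rw [hedef, hφdef]
    by_cases h1' : s ∈ Ioc (t - δ) t
    · simp only [h1', if_true]
      rw [neg_mul, div_mul_cancel₀ _ (hγepos s).ne']
    · by_cases h2' : s ∈ Ioc t (t + δ)
      · simp only [h1', h2', if_false, if_true]
        rw [div_mul_cancel₀ _ (hγepos s).ne']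
      · simp [h1', h2']
  set v : ℝ → ℝ := fun s => ustar s + e s with hvdef
  have hvmeas : Measurable v := humeas.add hemeas
  have hIocsub1 : Ioc (t - δ) t ⊆ Icc (0:ℝ) T := fun r hr => ⟨by linarith [hr.1], le_trans hr.2 htT.le⟩
  have hIocsub2 : Ioc t (t + δ) ⊆ Icc (0:ℝ) T := fun r hr => ⟨by linarith [hr.1], le_trans hr.2 h4⟩
  have hvmem : memSu T a α β v := by
    refine ⟨hvmeas, fun s hs => ?_⟩
    have hη' := hηb s hs
    have hediv : 0 ≤ ε / γe s := div_nonneg hεpos.le (hγepos s).le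
    have hediv' : ε / γe s ≤ η := le_trans (div_le_self hεpos.le (hγe1 s)) hεη
    have hvs : v s = ustar s + e s := rfl
    rw [hvs, hedef]
    by_cases h1' : s ∈ Ioc (t - δ) t
    · simp only [h1', if_true]
      constructor
      · linarith [hη'.1]
      · have := (husu s hs).2; linarith
    · by_cases h2' : s ∈ Ioc t (t + δ)
      · simp only [h1', h2', if_false, if_true]
        constructor
        · linarith [(husu s hs).1]
        · linarith [hη'.2]
      · simp only [h1', h2', if_false]
        have := husu s hs
        constructor <;> simp <;> linarith [this.1, this.2]
  -- integral of the step function φ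
  have hφII : ∀ p q : ℝ, IntervalIntegrable φ volume p q :=
    intervalIntegrable_of_bdd hφmeas hφ_abs
  have huII : ∀ p q : ℝ, p ∈ Icc (0:ℝ) T → q ∈ Icc (0:ℝ) T →
      IntervalIntegrable ustar volume p q := by
    intro p q hp hq
    exact hII ustar (integrableOn_of_bdd measurableSet_Icc measure_Icc_lt_top humeas hu_bd) p q hp hq
  have hφval : ∀ r, φ r = if r ∈ Ioc (t - δ) t then -ε else if r ∈ Ioc t (t + δ) then ε else 0 :=
    fun r => rfl
  have hφ0 : ∀ r, r ≤ t - δ → φ r = 0 := by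
    intro r hr
    rw [hφval r, if_neg (fun hm => absurd hm.1 (not_lt.mpr hr)),
      if_neg (fun hm => absurd hm.1 (not_lt.mpr (by linarith : r ≤ t)))]
  have hφ0' : ∀ r, t + δ < r → φ r = 0 := by
    intro r hr
    rw [hφval r, if_neg (fun hm => absurd hm.2 (not_le.mpr (by linarith : t < r))),
      if_neg (fun hm => absurd hm.2 (not_le.mpr hr))]
  have hφL : ∀ r, r ∈ Ioc (t - δ) t → φ r = -ε := by
    intro r hr
    rw [hφval r, if_pos hr]
  have hφR : ∀ r, t < r → r ≤ t + δ → φ r = ε := by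
    intro r h' h''
    rw [hφval r, if_neg (fun hm => absurd hm.2 (not_le.mpr h')), if_pos ⟨h', h''⟩]
  have hseg0 : (∫ r in (0:ℝ)..(t - δ), φ r) = 0 := by
    rw [intervalIntegral.integral_congr_ae (g := fun _ => (0:ℝ))
      (ae_of_all _ ?_), intervalIntegral.integral_zero]
    intro r hr
    rcases mem_uIoc.mp hr with h | h
    · exact hφ0 r h.2
    · exact hφ0 r (le_trans h.2 h1)
  have hsegL : ∀ s, t - δ ≤ s → s ≤ t → (∫ r in (t - δ)..s, φ r) = -(ε * (s - (t - δ))) := by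
    intro s hls hst
    rw [intervalIntegral.integral_congr_ae (g := fun _ => -ε) (ae_of_all _ ?_),
      intervalIntegral.integral_const]
    · rw [smul_eq_mul]; ring
    · intro r hr
      rcases mem_uIoc.mp hr with h | h
      · exact hφL r ⟨h.1, le_trans h.2 hst⟩
      · exact absurd (lt_of_le_of_lt h.2 (lt_of_le_of_lt hls h.1)) (lt_irrefl r)
  have hsegR : ∀ s, t ≤ s → s ≤ t + δ → (∫ r in t..s, φ r) = ε * (s - t) := by
    intro s hts hsd
    rw [intervalIntegral.integral_congr_ae (g := fun _ => ε) (ae_of_all _ ?_),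
      intervalIntegral.integral_const]
    · rw [smul_eq_mul]; ring
    · intro r hr
      rcases mem_uIoc.mp hr with h | h
      · exact hφR r h.1 (le_trans h.2 hsd)
      · exact absurd (lt_of_le_of_lt h.2 (lt_of_le_of_lt hts h.1)) (lt_irrefl r)
  have hsegE : ∀ s, t + δ ≤ s → (∫ r in (t + δ)..s, φ r) = 0 := by
    intro s hds
    rw [intervalIntegral.integral_congr_ae (g := fun _ => (0:ℝ))
      (ae_of_all _ ?_), intervalIntegral.integral_zero]
    intro r hr
    rcases mem_uIoc.mp hr with h | h
    · exact hφ0' r h.1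
    · exact hφ0' r (lt_of_le_of_lt hds h.1)
  set D : ℝ → ℝ := fun s => ∫ r in (0:ℝ)..s, φ r with hDdef
  have hDraw : ∀ q, (∫ r in (0:ℝ)..q, φ r) = D q := fun q => rfl
  have hDsplit : ∀ p q : ℝ, (∫ r in (0:ℝ)..p, φ r) + (∫ r in p..q, φ r) = D q := by
    intro p q
    exact intervalIntegral.integral_add_adjacent_intervals (hφII 0 p) (hφII p q)
  have hDt : D t = -(ε * δ) := by
    rw [← hDsplit (t - δ) t, hseg0, hsegL t (by linarith) le_rfl]
    ring
  have hDmid1 : ∀ s, t - δ ≤ s → s ≤ t → D s = -(ε * (s - (t - δ))) := by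
    intro s hls hst
    rw [← hDsplit (t - δ) s, hseg0, hsegL s hls hst, zero_add]
  have hDmid2 : ∀ s, t ≤ s → s ≤ t + δ → D s = -(ε * δ) + ε * (s - t) := by
    intro s hts hsd
    rw [← hDsplit t s, hsegR s hts hsd, hDraw t, hDt]
  have hDtδ : D (t + δ) = 0 := by
    rw [hDmid2 (t + δ) (by linarith) le_rfl]
    ring
  have hDafter : ∀ s, t + δ ≤ s → D s = 0 := by
    intro s hds
    rw [← hDsplit (t + δ) s, hsegE s hds, add_zero, hDraw (t + δ), hDtδ]
  have hDbefore : ∀ s, 0 ≤ s → s ≤ t - δ → D s = 0 := by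
    intro s hs0 hsl
    rw [← hDraw s]
    rw [intervalIntegral.integral_congr_ae (g := fun _ => (0:ℝ))
      (ae_of_all _ ?_), intervalIntegral.integral_zero]
    intro r hr
    rcases mem_uIoc.mp hr with h | h
    · exact hφ0 r (le_trans h.2 hsl)
    · exact hφ0 r (by linarith [h.2, hs0] : r ≤ t - δ)
  have hDrange : ∀ s ∈ Icc (0:ℝ) T, -(ε * δ) ≤ D s ∧ D s ≤ 0 := by
    intro s hs
    have hεδnn : 0 ≤ ε * δ := mul_nonneg hεpos.le hδ.le
    rcases le_or_gt s (t - δ) with h' | h'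
    · rw [hDbefore s hs.1 h']
      exact ⟨by linarith, le_rfl⟩
    · rcases le_or_gt s t with h'' | h''
      · rw [hDmid1 s h'.le h'']
        have hx1 : 0 ≤ ε * (s - (t - δ)) := mul_nonneg hεpos.le (by linarith)
        have hx2 : ε * (s - (t - δ)) ≤ ε * δ :=
          mul_le_mul_of_nonneg_left (by linarith) hεpos.le
        exact ⟨by linarith, by linarith⟩
      · rcases le_or_gt s (t + δ) with h''' | h'''
        · rw [hDmid2 s h''.le h''']
          have hx1 : 0 ≤ ε * (s - t) := mul_nonneg hεpos.le (by linarith)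
          have hx2 : ε * (s - t) ≤ ε * δ :=
            mul_le_mul_of_nonneg_left (by linarith) hεpos.le
          exact ⟨by linarith, by linarith⟩
        · rw [hDafter s h'''.le]
          exact ⟨by linarith, le_rfl⟩
  have hDout : ∀ s, s ∈ Icc (0:ℝ) T → (s ≤ t - δ ∨ t + δ ≤ s) → D s = 0 := by
    intro s hs h'
    rcases h' with h' | h'
    · exact hDbefore s hs.1 h'
    · exact hDafter s h'
  have hDT : D T = 0 := hDafter T (by linarith)
  have heval : ∀ r, e r = if r ∈ Ioc (t - δ) t then -(ε / γe r)
      else if r ∈ Ioc t (t + δ) then ε / γe r else 0 := fun r => rfl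
  have he0a : ∀ r, r ≤ t - δ → e r = 0 := by
    intro r hr
    rw [heval r, if_neg (fun hm => absurd hm.1 (not_lt.mpr hr)),
      if_neg (fun hm => absurd hm.1 (not_lt.mpr (by linarith : r ≤ t)))]
  have he0b : ∀ r, t + δ < r → e r = 0 := by
    intro r hr
    rw [heval r, if_neg (fun hm => absurd hm.2 (not_le.mpr (by linarith : t < r))),
      if_neg (fun hm => absurd hm.2 (not_le.mpr hr))]
  -- trajectory of v
  set Xv : ℝ → ℝ := fun s => X s + D s with hXvdef
  have hXv_traj : ∀ s ∈ Icc (0:ℝ) T, Xv s = trajU a α β x₀ v s := by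
    intro s hs
    unfold trajU
    have h0 : (∫ r in (0:ℝ)..s, (v r * (1 + a * β r) - α r / 2))
        = ∫ r in (0:ℝ)..s, (g r + φ r) := by
      apply intervalIntegral.integral_congr
      intro r hr
      have hr' : r ∈ Icc (0:ℝ) T := hsubIcc s hs hr
      show v r * (1 + a * β r) - α r / 2 = g r + φ r
      rw [show v r = ustar r + e r from rfl, hγee r hr', ← hαee r hr', ← heγφ r,
        show g r = ustar r * γe r - αe r / 2 from rfl]
      ring
    rw [h0, intervalIntegral.integral_add (hII g hgint 0 s ⟨le_rfl, hT0⟩ hs) (hφII 0 s)]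
    show X s + D s = _
    rw [show X s = x₀ + ∫ r in (0:ℝ)..s, g r from rfl,
      show D s = ∫ r in (0:ℝ)..s, φ r from rfl]
    ring
  have hDc : ContinuousOn D (Icc 0 T) := by
    have h := intervalIntegral.continuousOn_primitive_interval (a := (0:ℝ)) (b := T)
        (f := φ) (μ := volume)
        (by rw [uIcc_of_le hT0]
            exact integrableOn_of_bdd measurableSet_Icc measure_Icc_lt_top hφmeas
              (fun x _ => hφ_abs x))
    rw [uIcc_of_le hT0] at h
    exact h
  have hXvc : ContinuousOn Xv (Icc 0 T) := hXc.add hDc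
  -- rewriting the objective
  have hJ : ∀ (u Y : ℝ → ℝ), (∀ s ∈ Icc (0:ℝ) T, Y s = trajU a α β x₀ u s) →
      JobjU T a σ Ch Cs ChT CsT α β x₀ u =
        (∫ s in (0:ℝ)..T,
          (-(a * u s ^ 2 * γe s) + αe s ^ 2 / (4 * βe s) - holding Ch Cs (Y s)))
        - holding ChT CsT (Y T) - σ * sSup (Y '' Icc 0 T) := by
    intro u Y hY
    unfold JobjU
    have h0 : (∫ s in (0:ℝ)..T,
        (-(a * u s ^ 2 * (1 + a * β s)) + α s ^ 2 / (4 * β s)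
          - holding Ch Cs (trajU a α β x₀ u s)))
        = ∫ s in (0:ℝ)..T,
          (-(a * u s ^ 2 * γe s) + αe s ^ 2 / (4 * βe s) - holding Ch Cs (Y s)) := by
      apply intervalIntegral.integral_congr
      intro r hr
      have hr' : r ∈ Icc (0:ℝ) T := by rwa [uIcc_of_le hT0] at hr
      show -(a * u r ^ 2 * (1 + a * β r)) + α r ^ 2 / (4 * β r)
          - holding Ch Cs (trajU a α β x₀ u r)
        = -(a * u r ^ 2 * γe r) + αe r ^ 2 / (4 * βe r) - holding Ch Cs (Y r)
      rw [hγee r hr', ← hαee r hr', ← hβee r hr', ← hY r hr']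
    have himg : trajU a α β x₀ u '' Icc 0 T = Y '' Icc 0 T :=
      image_congr fun s hs => (hY s hs).symm
    rw [h0, ← hY T ⟨hT0, le_rfl⟩, himg]
  -- integrability of the integrands
  have hvabs : ∀ s ∈ Icc (0:ℝ) T, |v s| ≤ M + η := by
    intro s hs
    calc |v s| ≤ |ustar s| + |e s| := abs_add_le _ _
      _ ≤ M + η := add_le_add (hu_bd s hs) (le_trans (he_abs s) hεη)
  have hη0 : (0:ℝ) ≤ M + η := by linarith
  have hCγ0 : (0:ℝ) ≤ Cγ := le_trans (abs_nonneg _) (by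
    have h := hCγ 0 ⟨le_rfl, hT0⟩; rwa [Real.norm_eq_abs] at h)
  have hsq_bd : ∀ (u' : ℝ → ℝ) (Mu : ℝ), 0 ≤ Mu → (∀ s ∈ Icc (0:ℝ) T, |u' s| ≤ Mu) →
      ∀ s ∈ Icc (0:ℝ) T, |(-(a * u' s ^ 2 * γe s))| ≤ a * Mu ^ 2 * Cγ := by
    intro u' Mu hMu hu' s hs
    rw [abs_neg, abs_mul, abs_mul, abs_of_pos ha, abs_pow]
    have h1 : |u' s| ^ 2 ≤ Mu ^ 2 := pow_le_pow_left₀ (abs_nonneg _) (hu' s hs) 2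
    have h2 : |γe s| ≤ Cγ := by have h := hCγ s hs; rwa [Real.norm_eq_abs] at h
    have h3 : (0:ℝ) ≤ |u' s| ^ 2 := by positivity
    calc a * |u' s| ^ 2 * |γe s| ≤ a * Mu ^ 2 * |γe s| := by
          apply mul_le_mul_of_nonneg_right _ (abs_nonneg _)
          exact mul_le_mul_of_nonneg_left h1 ha.le
      _ ≤ a * Mu ^ 2 * Cγ := by
          apply mul_le_mul_of_nonneg_left h2
          positivity
  have hf2c : Continuous (fun s => αe s ^ 2 / (4 * βe s)) :=
    (hαec.pow 2).div (continuous_const.mul hβec)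
      (fun s => by have := hβepos s; positivity)
  have hf2int : IntegrableOn (fun s => αe s ^ 2 / (4 * βe s)) (Icc (0:ℝ) T) :=
    hf2c.continuousOn.integrableOn_Icc
  have hf3Uint : IntegrableOn (fun s => holding Ch Cs (X s)) (Icc (0:ℝ) T) :=
    ((holding_continuous Ch Cs).comp_continuousOn hXc).integrableOn_Icc
  have hf3Vint : IntegrableOn (fun s => holding Ch Cs (Xv s)) (Icc (0:ℝ) T) :=
    ((holding_continuous Ch Cs).comp_continuousOn hXvc).integrableOn_Icc
  have hf1Uint : IntegrableOn (fun s => -(a * ustar s ^ 2 * γe s)) (Icc (0:ℝ) T) :=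
    integrableOn_of_bdd measurableSet_Icc measure_Icc_lt_top
      (((measurable_const.mul (humeas.pow_const 2)).mul hγec.measurable).neg)
      (hsq_bd ustar M hMnn hu_bd)
  have hf1Vint : IntegrableOn (fun s => -(a * v s ^ 2 * γe s)) (Icc (0:ℝ) T) :=
    integrableOn_of_bdd measurableSet_Icc measure_Icc_lt_top
      (((measurable_const.mul (hvmeas.pow_const 2)).mul hγec.measurable).neg)
      (hsq_bd v (M + η) hη0 hvabs)
  have hQUint : IntegrableOn
      (fun s => -(a * ustar s ^ 2 * γe s) + αe s ^ 2 / (4 * βe s)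
        - holding Ch Cs (X s)) (Icc (0:ℝ) T) := (hf1Uint.add hf2int).sub hf3Uint
  have hQVint : IntegrableOn
      (fun s => -(a * v s ^ 2 * γe s) + αe s ^ 2 / (4 * βe s)
        - holding Ch Cs (Xv s)) (Icc (0:ℝ) T) := (hf1Vint.add hf2int).sub hf3Vint
  have h0T : (0:ℝ) ∈ Icc (0:ℝ) T := ⟨le_rfl, hT0⟩
  have hTT : T ∈ Icc (0:ℝ) T := ⟨hT0, le_rfl⟩
  -- the three pieces of the difference
  have hW1meas : Measurable (fun s => ustar s * φ s) := humeas.mul hφmeas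
  have hW1bd : ∀ s ∈ Icc (0:ℝ) T, |ustar s * φ s| ≤ M * ε := by
    intro s hs
    rw [abs_mul]
    exact mul_le_mul (hu_bd s hs) (hφ_abs s) (abs_nonneg _) hMnn
  have hW1int : IntegrableOn (fun s => ustar s * φ s) (Icc (0:ℝ) T) :=
    integrableOn_of_bdd measurableSet_Icc measure_Icc_lt_top hW1meas hW1bd
  have hW2meas : Measurable (fun s => a * e s ^ 2 * γe s) :=
    (measurable_const.mul (hemeas.pow_const 2)).mul hγec.measurable
  have he_sq : ∀ x, e x ^ 2 * γe x ≤ ε ^ 2 := by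
    intro x
    have hγ1 := hγe1 x
    have hγp := hγepos x
    have hkey : (ε / γe x) ^ 2 * γe x ≤ ε ^ 2 := by
      have heq : (ε / γe x) ^ 2 * γe x = ε ^ 2 / γe x := by
        field_simp
      rw [heq]
      exact div_le_self (sq_nonneg ε) hγ1
    rw [heval x]
    by_cases h1' : x ∈ Ioc (t - δ) t
    · rw [if_pos h1', neg_pow]
      simpa using hkey
    · by_cases h2' : x ∈ Ioc t (t + δ)
      · rw [if_neg h1', if_pos h2']
        exact hkey
      · rw [if_neg h1', if_neg h2']
        have h00 : (0:ℝ) ^ 2 * γe x = 0 := by ring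
        rw [h00]
        exact sq_nonneg ε
  have hW2bd : ∀ s ∈ Icc (0:ℝ) T, |a * e s ^ 2 * γe s| ≤ a * ε ^ 2 := by
    intro s hs
    have hnn : 0 ≤ a * e s ^ 2 * γe s :=
      mul_nonneg (mul_nonneg ha.le (sq_nonneg _)) (hγepos s).le
    rw [abs_of_nonneg hnn, mul_assoc]
    exact mul_le_mul_of_nonneg_left (he_sq s) ha.le
  have hW2int : IntegrableOn (fun s => a * e s ^ 2 * γe s) (Icc (0:ℝ) T) :=
    integrableOn_of_bdd measurableSet_Icc measure_Icc_lt_top hW2meas hW2bd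
  have hW3int : IntegrableOn (fun s => holding Ch Cs (X s) - holding Ch Cs (Xv s))
      (Icc (0:ℝ) T) := hf3Uint.sub hf3Vint
  -- value of the W1 integral
  have hW1val : (∫ s in (0:ℝ)..T, ustar s * φ s) = -(ε * A) + ε * B := by
    have hsp1 : (∫ s in (0:ℝ)..(t - δ), ustar s * φ s) = 0 := by
      rw [intervalIntegral.integral_congr_ae (g := fun _ => (0:ℝ))
        (ae_of_all _ ?_), intervalIntegral.integral_zero]
      intro r hr
      rcases mem_uIoc.mp hr with h | h
      · show ustar r * φ r = 0
        rw [hφ0 r h.2, mul_zero]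
      · show ustar r * φ r = 0
        rw [hφ0 r (le_trans h.2 h1), mul_zero]
    have hsp2 : (∫ s in (t - δ)..t, ustar s * φ s) = -(ε * A) := by
      rw [intervalIntegral.integral_congr_ae (g := fun r => -ε * ustar r)
        (ae_of_all _ ?_), intervalIntegral.integral_const_mul, ← hAdef]
      · ring
      · intro r hr
        rcases mem_uIoc.mp hr with h | h
        · show ustar r * φ r = -ε * ustar r
          rw [hφL r ⟨h.1, h.2⟩]
          ring
        · exact absurd (lt_of_le_of_lt h.2 (by linarith : t - δ < t)) (not_lt.mpr h.1.le)
    have hsp3 : (∫ s in t..(t + δ), ustar s * φ s) = ε * B := by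
      rw [intervalIntegral.integral_congr_ae (g := fun r => ε * ustar r)
        (ae_of_all _ ?_), intervalIntegral.integral_const_mul, ← hBdef]
      intro r hr
      rcases mem_uIoc.mp hr with h | h
      · show ustar r * φ r = ε * ustar r
        rw [hφR r h.1 h.2]
        ring
      · exact absurd (lt_of_le_of_lt h.2 (by linarith : t < t + δ)) (not_lt.mpr h.1.le)
    have hsp4 : (∫ s in (t + δ)..T, ustar s * φ s) = 0 := by
      rw [intervalIntegral.integral_congr_ae (g := fun _ => (0:ℝ))
        (ae_of_all _ ?_), intervalIntegral.integral_zero]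
      intro r hr
      rcases mem_uIoc.mp hr with h | h
      · show ustar r * φ r = 0
        rw [hφ0' r h.1, mul_zero]
      · show ustar r * φ r = 0
        rw [hφ0' r (lt_of_le_of_lt h4 h.1), mul_zero]
    have hi1 := hII _ hW1int 0 (t - δ) h0T htδm
    have hi2 := hII _ hW1int (t - δ) t htδm htmem
    have hi3 := hII _ hW1int t (t + δ) htmem htδm'
    have hi4 := hII _ hW1int (t + δ) T htδm' hTT
    rw [← intervalIntegral.integral_add_adjacent_intervals (hi1.trans hi2) (hi3.trans hi4),
      ← intervalIntegral.integral_add_adjacent_intervals hi1 hi2,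
      ← intervalIntegral.integral_add_adjacent_intervals hi3 hi4,
      hsp1, hsp2, hsp3, hsp4]
    ring
  -- bound on the W2 integral
  have hW2val : (∫ s in (0:ℝ)..T, a * e s ^ 2 * γe s) ≤ a * ε * Δ := by
    have hsp1 : (∫ s in (0:ℝ)..(t - δ), a * e s ^ 2 * γe s) = 0 := by
      rw [intervalIntegral.integral_congr_ae (g := fun _ => (0:ℝ))
        (ae_of_all _ ?_), intervalIntegral.integral_zero]
      intro r hr
      rcases mem_uIoc.mp hr with h | h
      · show a * e r ^ 2 * γe r = 0
        rw [he0a r h.2]; ring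
      · show a * e r ^ 2 * γe r = 0
        rw [he0a r (le_trans h.2 h1)]; ring
    have hsp4 : (∫ s in (t + δ)..T, a * e s ^ 2 * γe s) = 0 := by
      rw [intervalIntegral.integral_congr_ae (g := fun _ => (0:ℝ))
        (ae_of_all _ ?_), intervalIntegral.integral_zero]
      intro r hr
      rcases mem_uIoc.mp hr with h | h
      · show a * e r ^ 2 * γe r = 0
        rw [he0b r h.1]; ring
      · show a * e r ^ 2 * γe r = 0
        rw [he0b r (lt_of_le_of_lt h4 h.1)]; ring
    have hi1 := hII _ hW2int 0 (t - δ) h0T htδm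
    have hi23 := hII _ hW2int (t - δ) (t + δ) htδm htδm'
    have hi4 := hII _ hW2int (t + δ) T htδm' hTT
    have hmid : (∫ s in (t - δ)..(t + δ), a * e s ^ 2 * γe s) ≤ a * ε ^ 2 * (2 * δ) := by
      have hconst : (∫ _ in (t - δ)..(t + δ), (a * ε ^ 2 : ℝ)) = a * ε ^ 2 * (2 * δ) := by
        rw [intervalIntegral.integral_const, smul_eq_mul]
        ring
      have hptw : ∀ x ∈ Icc (t - δ) (t + δ), a * e x ^ 2 * γe x ≤ a * ε ^ 2 := by
        intro x _
        have h' : a * e x ^ 2 * γe x = a * (e x ^ 2 * γe x) := by ring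
        rw [h']
        exact mul_le_mul_of_nonneg_left (he_sq x) ha.le
      have hmono := intervalIntegral.integral_mono_on (μ := volume)
        (by linarith : t - δ ≤ t + δ) hi23 (intervalIntegrable_const (c := a * ε ^ 2)) hptw
      rwa [hconst] at hmono
    have heq : (∫ s in (0:ℝ)..T, a * e s ^ 2 * γe s)
        = (∫ s in (0:ℝ)..(t - δ), a * e s ^ 2 * γe s)
          + (∫ s in (t - δ)..(t + δ), a * e s ^ 2 * γe s)
          + (∫ s in (t + δ)..T, a * e s ^ 2 * γe s) := by
      rw [← intervalIntegral.integral_add_adjacent_intervals (hi1.trans hi23) hi4,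
        ← intervalIntegral.integral_add_adjacent_intervals hi1 hi23]
    rw [heq, hsp1, hsp4]
    have hfin : a * ε ^ 2 * (2 * δ) ≤ a * ε * Δ := by
      have h5 : a * ε ^ 2 * (2 * δ) = (a * ε) * (2 * (ε * δ)) := by ring
      have h6 : (a * ε) * (2 * (ε * δ)) ≤ (a * ε) * Δ :=
        mul_le_mul_of_nonneg_left hεΔ (mul_nonneg ha.le hεpos.le)
      linarith
    linarith [hmid]
  -- the holding-cost integral is nonnegative
  have hW3val : 0 ≤ ∫ s in (0:ℝ)..T, (holding Ch Cs (X s) - holding Ch Cs (Xv s)) := by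
    apply intervalIntegral.integral_nonneg hT0
    intro s hs
    rcases le_or_gt s (t - δ) with h' | h'
    · have hD0 : D s = 0 := hDout s hs (Or.inl h')
      rw [show Xv s = X s + D s from rfl, hD0, add_zero, sub_self]
    · rcases le_or_gt (t + δ) s with h'' | h''
      · have hD0 : D s = 0 := hDout s hs (Or.inr h'')
        rw [show Xv s = X s + D s from rfl, hD0, add_zero, sub_self]
      · have hXlb' : c ≤ X s := by
          apply hXlb s hs
          rw [abs_le]
          constructor <;> linarith
        have hDr := hDrange s hs
        have h0v : 0 ≤ X s + D s := by linarith [hεc]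
        have hlev : X s + D s ≤ X s := by linarith [hDr.2]
        have hm := holding_mono (Ch := Ch) (Cs := Cs) hCh.le h0v hlev
        rw [show Xv s = X s + D s from rfl]
        linarith
  -- interval integrability of the Q's
  have hQUII : IntervalIntegrable
      (fun s => -(a * ustar s ^ 2 * γe s) + αe s ^ 2 / (4 * βe s)
        - holding Ch Cs (X s)) volume 0 T := hII _ hQUint 0 T h0T hTT
  have hQVII : IntervalIntegrable
      (fun s => -(a * v s ^ 2 * γe s) + αe s ^ 2 / (4 * βe s)
        - holding Ch Cs (Xv s)) volume 0 T := hII _ hQVint 0 T h0T hTT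
  -- the pointwise difference
  have hdiff : ∀ s, (-(a * v s ^ 2 * γe s) + αe s ^ 2 / (4 * βe s)
        - holding Ch Cs (Xv s))
      - (-(a * ustar s ^ 2 * γe s) + αe s ^ 2 / (4 * βe s) - holding Ch Cs (X s))
      = -(2 * a) * (ustar s * φ s) + (-(a * e s ^ 2 * γe s))
        + (holding Ch Cs (X s) - holding Ch Cs (Xv s)) := by
    intro s
    rw [show v s = ustar s + e s from rfl]
    linear_combination (-(2 * a * ustar s)) * heγφ s
  -- assembling the integral inequality
  have hIdiff : (∫ s in (0:ℝ)..T,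
        (-(a * v s ^ 2 * γe s) + αe s ^ 2 / (4 * βe s) - holding Ch Cs (Xv s)))
      - (∫ s in (0:ℝ)..T,
        (-(a * ustar s ^ 2 * γe s) + αe s ^ 2 / (4 * βe s) - holding Ch Cs (X s)))
      ≥ a * ε * Δ := by
    rw [← intervalIntegral.integral_sub hQVII hQUII]
    have hcong : (∫ s in (0:ℝ)..T,
        ((-(a * v s ^ 2 * γe s) + αe s ^ 2 / (4 * βe s) - holding Ch Cs (Xv s))
        - (-(a * ustar s ^ 2 * γe s) + αe s ^ 2 / (4 * βe s) - holding Ch Cs (X s))))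
        = ∫ s in (0:ℝ)..T,
          (-(2 * a) * (ustar s * φ s) + (-(a * e s ^ 2 * γe s))
            + (holding Ch Cs (X s) - holding Ch Cs (Xv s))) :=
      intervalIntegral.integral_congr (fun s _ => hdiff s)
    rw [hcong]
    have hiW1 : IntervalIntegrable (fun s => -(2 * a) * (ustar s * φ s)) volume 0 T :=
      (hII _ hW1int 0 T h0T hTT).const_mul _
    have hiW2 : IntervalIntegrable (fun s => -(a * e s ^ 2 * γe s)) volume 0 T :=
      (hII _ hW2int 0 T h0T hTT).neg
    have hiW3 : IntervalIntegrable
        (fun s => holding Ch Cs (X s) - holding Ch Cs (Xv s)) volume 0 T :=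
      hII _ hW3int 0 T h0T hTT
    rw [intervalIntegral.integral_add (hiW1.add hiW2) hiW3,
      intervalIntegral.integral_add hiW1 hiW2,
      intervalIntegral.integral_const_mul, hW1val, intervalIntegral.integral_neg]
    have h7 : -(2 * a) * (-(ε * A) + ε * B) = 2 * a * ε * Δ := by
      rw [hΔdef]; ring
    have h8 : -(∫ s in (0:ℝ)..T, a * e s ^ 2 * γe s) ≥ -(a * ε * Δ) := by
      linarith [hW2val]
    linarith [hW3val]
  -- the sup term decreases
  have hne : (Icc (0:ℝ) T).Nonempty := ⟨0, h0T⟩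
  have hbdd : BddAbove (X '' Icc 0 T) :=
    (isCompact_Icc.image_of_continuousOn hXc).bddAbove
  have hS : sSup (Xv '' Icc 0 T) ≤ sSup (X '' Icc 0 T) := by
    apply csSup_le (hne.image _)
    rintro y ⟨s, hs, rfl⟩
    have h9 : Xv s ≤ X s := by
      rw [show Xv s = X s + D s from rfl]
      linarith [(hDrange s hs).2]
    exact le_trans h9 (le_csSup hbdd ⟨s, hs, rfl⟩)
  -- conclusion
  have hXvT : Xv T = X T := by
    rw [show Xv T = X T + D T from rfl, hDT, add_zero]
  have hineq := hopt v hvmem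
  rw [hJ ustar X hX_traj, hJ v Xv hXv_traj, hXvT] at hineq
  have hSle : σ * sSup (Xv '' Icc 0 T) ≤ σ * sSup (X '' Icc 0 T) :=
    mul_le_mul_of_nonneg_left hS hσ
  have haεΔ : 0 < a * ε * Δ := mul_pos (mul_pos ha hεpos) hΔpos
  generalize hg1 : (∫ s in (0:ℝ)..T,
      (-(a * v s ^ 2 * γe s) + αe s ^ 2 / (4 * βe s) - holding Ch Cs (Xv s))) = IV
    at hineq hIdiff
  generalize hg2 : (∫ s in (0:ℝ)..T,
      (-(a * ustar s ^ 2 * γe s) + αe s ^ 2 / (4 * βe s) - holding Ch Cs (X s))) = IU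
    at hineq hIdiff
  generalize hg3 : sSup (Xv '' Icc (0:ℝ) T) = S1 at hineq hSle
  generalize hg4 : sSup (X '' Icc (0:ℝ) T) = S2 at hineq hSle
  linarith [hIdiff, hineq, hSle, haεΔ]
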